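/- For |u| > 2, the logarithmic potential of the semicircle law, Ω(u) = ∫_{−2}^{2} log|u−λ| · (1/2π)√(4−λ²) dλ, equals u²/4 − 1/2 − (|u|/4)√(u²−4) + log((|u| + √(u²−4))/2). -/

import Mathlib

/-!
Substitute `λ = 2 cos θ`, which turns the semicircle law into `(2/π) sin² θ dθ` on `[0, π]`, and
write `u = s + s⁻¹` with `s = (u + √(u² - 4))/2 > 1`. Then
`u - 2 cos θ = s (1 - 2 s⁻¹ cos θ + s⁻²) = s |1 - s⁻¹ e^{iθ}|²`, and the Taylor series of
`log (1 - z)` gives `log (1 - 2 w cos θ + w²) = -2 ∑_{n ≥ 1} wⁿ cos (n θ) / n` for `|w| < 1`.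
Against `sin² θ` only the `n = 2` term survives, so `Ω(u) = log s + s⁻² / 2`, which is the claimed
closed form; the case `u < -2` follows since `Ω` is even.
-/

open Real MeasureTheory intervalIntegral

lemma integral_cos_intCast_mul (c : ℤ) :
    ∫ θ in (0 : ℝ)..π, cos (c * θ) = if c = 0 then π else 0 := by
  split_ifs with hc
  · simp [hc]
  · have hc' : (c : ℝ) ≠ 0 := Int.cast_ne_zero.2 hc
    simp [integral_comp_mul_left _ hc', integral_cos, sin_int_mul_pi]

lemma cos_mul_mul_sin_sq (x θ : ℝ) :
    cos (x * θ) * sin θ ^ 2 = cos (x * θ) / 2 - cos ((x + 2) * θ) / 4 - cos ((x - 2) * θ) / 4 := by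
  rw [add_mul, sub_mul, cos_add, cos_sub, cos_two_mul, sin_two_mul, sin_sq]
  ring

lemma integral_cos_natCast_mul_mul_sin_sq (n : ℕ) :
    ∫ θ in (0 : ℝ)..π, cos (n * θ) * sin θ ^ 2
      = if n = 0 then π / 2 else if n = 2 then -(π / 4) else 0 := by
  have hcont (c : ℤ) : IntervalIntegrable (fun θ : ℝ ↦ cos (c * θ)) volume 0 π := by
    apply Continuous.intervalIntegrable; fun_prop
  simp_rw [cos_mul_mul_sin_sq]
  have h_add : (n : ℝ) + 2 = ((n + 2 : ℤ) : ℝ) := by push_cast; ring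
  have h_sub : (n : ℝ) - 2 = ((n - 2 : ℤ) : ℝ) := by push_cast; ring
  rw [h_add, h_sub, ← Int.cast_natCast,
    integral_sub (((hcont _).div_const _).sub ((hcont _).div_const _)) ((hcont _).div_const _),
    integral_sub ((hcont _).div_const _) ((hcont _).div_const _),
    intervalIntegral.integral_div, intervalIntegral.integral_div, intervalIntegral.integral_div,
    integral_cos_intCast_mul, integral_cos_intCast_mul, integral_cos_intCast_mul]
  split_ifs <;> first | omega | ring

lemma integral_sin_sq_zero_pi : ∫ θ in (0 : ℝ)..π, sin θ ^ 2 = π / 2 := by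
  simp [integral_sin_sq]

lemma normSq_one_sub_ofReal_mul_exp (w θ : ℝ) :
    Complex.normSq (1 - w * Complex.exp (θ * Complex.I)) = 1 - 2 * w * cos θ + w ^ 2 := by
  rw [Complex.normSq_apply]
  simp only [Complex.sub_re, Complex.sub_im, Complex.one_re, Complex.one_im, Complex.mul_re,
    Complex.mul_im, Complex.ofReal_re, Complex.ofReal_im, Complex.exp_ofReal_mul_I_re,
    Complex.exp_ofReal_mul_I_im]
  linear_combination w ^ 2 * sin_sq_add_cos_sq θ

-- The `n = 0` term is `w ^ 0 * cos 0 / 0 = 0`.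
lemma hasSum_pow_mul_cos_div {w : ℝ} (hw : |w| < 1) (θ : ℝ) :
    HasSum (fun n : ℕ ↦ w ^ n * cos (n * θ) / n) (-log (1 - 2 * w * cos θ + w ^ 2) / 2) := by
  set z : ℂ := w * Complex.exp (θ * Complex.I)
  have hz : ‖z‖ < 1 := by simpa [z, Complex.norm_exp_ofReal_mul_I] using hw
  have hre (n : ℕ) : (z ^ n / n).re = w ^ n * cos (n * θ) / n := by
    rw [mul_pow, ← Complex.exp_nat_mul, ← Complex.ofReal_pow, ← Complex.ofReal_natCast,
      Complex.div_ofReal_re, Complex.re_ofReal_mul, ← mul_assoc, ← Complex.ofReal_mul,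
      Complex.exp_ofReal_mul_I_re]
  have hlog : (-Complex.log (1 - z)).re = -log (1 - 2 * w * cos θ + w ^ 2) / 2 := by
    rw [Complex.neg_re, Complex.log_re, Complex.norm_def, log_sqrt (Complex.normSq_nonneg _),
      normSq_one_sub_ofReal_mul_exp, neg_div]
  simpa only [hre, hlog] using Complex.hasSum_re (Complex.hasSum_taylorSeries_neg_log hz)

lemma abs_pow_mul_cos_div_le (w x : ℝ) (n : ℕ) : |w ^ n * cos x / n| ≤ |w| ^ n := by
  rcases Nat.eq_zero_or_pos n with rfl | hn
  · simp
  · rw [abs_div, Nat.abs_cast, abs_mul, abs_pow]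
    calc |w| ^ n * |cos x| / n ≤ |w| ^ n * 1 / 1 := by
          gcongr
          · exact abs_cos_le_one x
          · exact_mod_cast hn
      _ = |w| ^ n := by ring

lemma integral_log_one_sub_two_mul_cos_add_sq_mul_sin_sq {w : ℝ} (hw : |w| < 1) :
    ∫ θ in (0 : ℝ)..π, log (1 - 2 * w * cos θ + w ^ 2) * sin θ ^ 2 = π * w ^ 2 / 4 := by
  set F : ℕ → ℝ → ℝ := fun n θ ↦ -2 * (w ^ n * cos (n * θ) / n) * sin θ ^ 2
  have hF_bound (n : ℕ) (θ : ℝ) : ‖F n θ‖ ≤ 2 * |w| ^ n := by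
    rw [Real.norm_eq_abs, abs_mul, abs_mul, abs_neg, abs_two, abs_pow]
    have := abs_pow_mul_cos_div_le w (n * θ) n
    have : |sin θ| ^ 2 ≤ 1 := pow_le_one₀ (abs_nonneg _) (abs_sin_le_one θ)
    nlinarith [abs_nonneg (w ^ n * cos (n * θ) / n), abs_nonneg (sin θ)]
  have hF_sum : HasSum (fun n ↦ ∫ θ in (0 : ℝ)..π, F n θ)
      (∫ θ in (0 : ℝ)..π, log (1 - 2 * w * cos θ + w ^ 2) * sin θ ^ 2) := by
    refine hasSum_integral_of_dominated_convergence (fun n _ ↦ 2 * |w| ^ n)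
      (fun n ↦ by fun_prop) (fun n ↦ .of_forall fun θ _ ↦ hF_bound n θ)
      (.of_forall fun _ _ ↦ (summable_geometric_of_lt_one (abs_nonneg w) hw).mul_left 2)
      intervalIntegrable_const (.of_forall fun θ _ ↦ ?_)
    convert ((hasSum_pow_mul_cos_div hw θ).mul_left (-2)).mul_right (sin θ ^ 2) using 1 <;>
      first | rfl | ring
  have hF_int (n : ℕ) : ∫ θ in (0 : ℝ)..π, F n θ = if n = 2 then π * w ^ 2 / 4 else 0 := by
    have : ∫ θ in (0 : ℝ)..π, F n θ
        = -2 * (w ^ n / n) * ∫ θ in (0 : ℝ)..π, cos (n * θ) * sin θ ^ 2 := by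
      rw [← intervalIntegral.integral_const_mul]
      congr with θ
      ring
    rw [this, integral_cos_natCast_mul_mul_sin_sq]
    rcases eq_or_ne n 2 with rfl | h2
    · norm_num
      ring
    · rcases eq_or_ne n 0 with rfl | h0 <;> simp [*]
  rw [funext hF_int] at hF_sum
  exact hF_sum.unique (hasSum_ite_eq 2 _)

noncomputable def semicircleDensity (l : ℝ) : ℝ := 1 / (2 * π) * √(4 - l ^ 2)

lemma sqrt_four_sub_two_mul_cos_sq {θ : ℝ} (hθ : θ ∈ Set.Icc 0 π) :
    √(4 - (2 * cos θ) ^ 2) = 2 * sin θ := by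
  rw [show 4 - (2 * cos θ) ^ 2 = (2 * sin θ) ^ 2 by linear_combination (-4) * sin_sq_add_cos_sq θ,
    sqrt_sq (mul_nonneg zero_le_two (sin_nonneg_of_nonneg_of_le_pi hθ.1 hθ.2))]

lemma integral_mul_semicircleDensity {f : ℝ → ℝ} (hf : ContinuousOn f (Set.Icc (-2) 2)) :
    ∫ l in (-2 : ℝ)..2, f l * semicircleDensity l
      = 2 / π * ∫ θ in (0 : ℝ)..π, f (2 * cos θ) * sin θ ^ 2 := by
  have hsub := integral_comp_mul_deriv' (a := π) (b := 0) (f := fun θ ↦ 2 * cos θ)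
    (f' := fun θ ↦ -(2 * sin θ)) (g := fun l ↦ f l * semicircleDensity l)
    (fun θ _ ↦ (hasDerivAt_cos θ).const_mul 2 |>.congr_deriv (by ring)) (by fun_prop)
    ((hf.mul (by unfold semicircleDensity; fun_prop)).mono (by
      rintro _ ⟨θ, -, rfl⟩
      exact ⟨by linarith [neg_one_le_cos θ], by linarith [cos_le_one θ]⟩))
  simp only [cos_pi, cos_zero, Function.comp_def] at hsub
  rw [show (2 : ℝ) * -1 = -2 by norm_num, mul_one] at hsub
  rw [← hsub, integral_symm, ← intervalIntegral.integral_neg,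
    ← intervalIntegral.integral_const_mul]
  refine integral_congr fun θ hθ ↦ ?_
  rw [Set.uIcc_of_le pi_pos.le] at hθ
  simp only [semicircleDensity, sqrt_four_sub_two_mul_cos_sq hθ]
  field_simp

noncomputable def semicircleLogPotential (u : ℝ) : ℝ :=
  ∫ l in (-2 : ℝ)..2, log |u - l| * semicircleDensity l

lemma semicircleLogPotential_add_inv {s : ℝ} (hs : 1 < s) :
    semicircleLogPotential (s + s⁻¹) = log s + s⁻¹ ^ 2 / 2 := by
  have hs0 : 0 < s := one_pos.trans hs
  have hw : |s⁻¹| < 1 := by rw [abs_inv, abs_of_pos hs0]; exact inv_lt_one_of_one_lt₀ hs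
  have h2 : 2 < s + s⁻¹ := by
    nlinarith [mul_inv_cancel₀ hs0.ne', sq_nonneg (s - 1), inv_pos.2 hs0]
  have hfactor (θ : ℝ) : s + s⁻¹ - 2 * cos θ = s * (1 - 2 * s⁻¹ * cos θ + s⁻¹ ^ 2) := by
    field_simp
    ring
  have hpos (θ : ℝ) : 0 < 1 - 2 * s⁻¹ * cos θ + s⁻¹ ^ 2 := by
    have : 0 < s + s⁻¹ - 2 * cos θ := by linarith [cos_le_one θ]
    rw [hfactor] at this
    exact pos_of_mul_pos_right this hs0.le
  have hcont : ContinuousOn (fun l ↦ log |s + s⁻¹ - l|) (Set.Icc (-2) 2) :=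
    ContinuousOn.log (by fun_prop) fun l hl ↦ by
      rw [abs_ne_zero]; linarith [hl.2]
  have hlog (θ : ℝ) : log |s + s⁻¹ - 2 * cos θ| * sin θ ^ 2
      = log s * sin θ ^ 2 + log (1 - 2 * s⁻¹ * cos θ + s⁻¹ ^ 2) * sin θ ^ 2 := by
    rw [abs_of_pos (by linarith [cos_le_one θ]), hfactor, log_mul hs0.ne' (hpos θ).ne', add_mul]
  unfold semicircleLogPotential
  rw [integral_mul_semicircleDensity hcont, funext hlog, intervalIntegral.integral_add
    (Continuous.intervalIntegrable (by fun_prop) _ _)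
    (Continuous.intervalIntegrable (by fun_prop (disch := exact fun θ ↦ (hpos θ).ne')) _ _),
    intervalIntegral.integral_const_mul, integral_sin_sq_zero_pi,
    integral_log_one_sub_two_mul_cos_add_sq_mul_sin_sq hw]
  field_simp
  ring

lemma semicircleLogPotential_neg (u : ℝ) :
    semicircleLogPotential (-u) = semicircleLogPotential u := by
  have h := integral_comp_neg (a := (-2 : ℝ)) (b := 2) fun l ↦ log |u - l| * semicircleDensity l
  rw [neg_neg] at h
  rw [semicircleLogPotential, semicircleLogPotential, ← h]
  congr with l
  rw [semicircleDensity, semicircleDensity, neg_sq, show -u - l = -(u - -l) by ring, abs_neg]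

lemma semicircleLogPotential_abs (u : ℝ) :
    semicircleLogPotential |u| = semicircleLogPotential u := by
  rcases abs_choice u with h | h <;> rw [h]
  exact semicircleLogPotential_neg u

lemma semicircleLogPotential_of_two_lt {u : ℝ} (hu : 2 < u) :
    semicircleLogPotential u
      = u ^ 2 / 4 - 1 / 2 - u / 4 * √(u ^ 2 - 4) + log ((u + √(u ^ 2 - 4)) / 2) := by
  set r := √(u ^ 2 - 4)
  have hr : r ^ 2 = u ^ 2 - 4 := sq_sqrt (by nlinarith)
  have hs : 1 < (u + r) / 2 := by linarith [sqrt_nonneg (u ^ 2 - 4)]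
  have hinv : ((u + r) / 2)⁻¹ = (u - r) / 2 :=
    inv_eq_of_mul_eq_one_right (by linear_combination (-1 / 4) * hr)
  calc semicircleLogPotential u
      = semicircleLogPotential ((u + r) / 2 + ((u + r) / 2)⁻¹) := by rw [hinv]; ring_nf
    _ = log ((u + r) / 2) + ((u - r) / 2) ^ 2 / 2 := by
      rw [semicircleLogPotential_add_inv hs, hinv]
    _ = _ := by linear_combination (1 / 8) * hr

/-- For `|u| > 2`, the logarithmic potential of the semicircle law,
`Ω(u) = ∫_{-2}^{2} log|u-λ| · (1/2π)√(4-λ²) dλ`, equals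
`u²/4 - 1/2 - (|u|/4)√(u²-4) + log((|u| + √(u²-4))/2)`. -/
theorem stmt11 (u : ℝ) (hu : 2 < |u|) :
    (∫ l in (-2 : ℝ)..2, Real.log |u - l| * ((1 / (2 * Real.pi)) * Real.sqrt (4 - l ^ 2)))
      = u ^ 2 / 4 - 1 / 2 - (|u| / 4) * Real.sqrt (u ^ 2 - 4) +
        Real.log ((|u| + Real.sqrt (u ^ 2 - 4)) / 2) := by
  change semicircleLogPotential u = _
  rw [← semicircleLogPotential_abs, ← sq_abs u]
  exact semicircleLogPotential_of_two_lt hu
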